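/- Let $N\geq 1$, $1<p<\infty$, $m\in C([0,1])$ with $I^+ = \{r : m(r)>0\}$ satisfying $0 < \mathrm{meas}((0,1)\setminus I^+) < 1$. Fix $k\geq 1$ and $\gamma>0$, and let $f$ be continuous with $f(s)s>0$ for $s\neq 0$. Suppose $(\eta_n, y_n)$ is a sequence with $\eta_n \to +\infty$, where each $y_n$ is a nontrivial solution of $(r^{N-1}\varphi_p(y_n'))' + \gamma\eta_n r^{N-1}m(r)f(y_n)=0$ on $(0,1)$ with $y_n'(0)=y_n(1)=0$, and each $y_n$ has exactly $k-1$ simple zeros in $(0,1)$, with $f(s)/\varphi_p(s)$ bounded below by a positive constant. Then a contradiction arises: any closed subinterval of $I^+$ of positive length must eventually contain more than $k-1$ zeros of $y_n$, so the limit nodal intervals exhaust $(0,1)\setminus I^+$, contradicting $\mathrm{meas}((0,1)\setminus I^+) < 1$. Hence the parameter sequence $\eta_n$ along any such branch of $k-1$-nodal solutions is bounded. -/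

import Mathlib

open MeasureTheory Set Filter

/-- `φ_p(s) = |s|^(p-2) s`. -/
noncomputable def phi (p s : ℝ) : ℝ := |s| ^ (p - 2) * s

/-- A solution of `(r^{N-1} φ_p(u'))' + F(r) = 0` on `[0,1]`, in integrated form. -/
def SolEq (p : ℝ) (N : ℕ) (F : ℝ → ℝ) (u u' : ℝ → ℝ) : Prop :=
  (∀ r ∈ Icc (0:ℝ) 1, HasDerivWithinAt u (u' r) (Icc (0:ℝ) 1) r) ∧
  ContinuousOn u' (Icc (0:ℝ) 1) ∧
  ∀ r ∈ Icc (0:ℝ) 1,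
    r ^ (N - 1) * phi p (u' r)
      = (0:ℝ) ^ (N - 1) * phi p (u' 0) - ∫ t in (0:ℝ)..r, F t

/-!
On an interval where `u` has no zero, `v = -r^{N-1} φ_p(u') / φ_p(u)` satisfies the Riccati
inequality `v' ≥ F / φ_p(u) + (p-1) |v|^{p/(p-1)}`. Since `v' ≥ B |v|^q` with `q > 1` blows up in
finite time in both directions, a solution of `v' ≥ A + B |v|^q` cannot live on an interval of
length `L` once `A L` is large. On `[a, b] ⊆ (0, 1)` with `m ≥ δ > 0`, the bound `f(s)/φ_p(s) ≥ c`
gives `F / φ_p(y_n) ≥ γ η_n a^{N-1} δ c → ∞`; so for large `n` each of `k` disjoint subintervals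
of `[a, b]` contains a zero of `y_n`, which has only `k - 1` zeros.
-/

open Topology

lemma phi_of_pos {p s : ℝ} (hs : 0 < s) : phi p s = s ^ (p - 1) := by
  rw [phi, abs_of_pos hs, show p - 1 = p - 2 + 1 by ring, Real.rpow_add_one hs.ne']

lemma phi_of_neg {p s : ℝ} (hs : s < 0) : phi p s = -(-s) ^ (p - 1) := by
  rw [phi, abs_of_neg hs, show p - 1 = p - 2 + 1 by ring, Real.rpow_add_one (neg_ne_zero.2 hs.ne)]
  ring

lemma phi_ne_zero {p s : ℝ} (hs : s ≠ 0) : phi p s ≠ 0 :=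
  mul_ne_zero (Real.rpow_pos_of_pos (abs_pos.2 hs) _).ne' hs

lemma abs_phi {p : ℝ} (hp : p ≠ 1) (s : ℝ) : |phi p s| = |s| ^ (p - 1) := by
  rcases lt_trichotomy s 0 with hs | rfl | hs
  · rw [phi_of_neg hs, abs_neg, abs_of_neg hs,
      abs_of_pos (Real.rpow_pos_of_pos (neg_pos.2 hs) _)]
  · simp [phi, Real.zero_rpow (sub_ne_zero.2 hp)]
  · rw [phi_of_pos hs, abs_of_pos hs, abs_of_pos (by positivity)]

lemma phi_mul_self {p : ℝ} (hp : p ≠ 0) (s : ℝ) : phi p s * s = |s| ^ p := by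
  rcases eq_or_ne s 0 with rfl | hs
  · simp [Real.zero_rpow hp]
  · have h : |s| ≠ 0 := abs_ne_zero.2 hs
    rw [phi, mul_assoc, ← abs_mul_abs_self s, ← mul_assoc, ← Real.rpow_add_one h,
      ← Real.rpow_add_one h]
    ring_nf

lemma hasDerivAt_phi (p : ℝ) {s : ℝ} (hs : s ≠ 0) :
    HasDerivAt (phi p) ((p - 1) * |s| ^ (p - 2)) s := by
  rcases hs.lt_or_gt with hs | hs
  · have h := ((Real.hasDerivAt_rpow_const (p := p - 1) (Or.inl (neg_ne_zero.2 hs.ne))).comp s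
      (hasDerivAt_neg s)).neg
    rw [abs_of_neg hs]
    refine (h.congr_deriv (by ring_nf)).congr_of_eventuallyEq ?_
    filter_upwards [Iio_mem_nhds hs] with x hx
    exact phi_of_neg hx
  · rw [abs_of_pos hs]
    refine ((Real.hasDerivAt_rpow_const (p := p - 1) (Or.inl hs.ne')).congr_deriv
      (by ring_nf)).congr_of_eventuallyEq ?_
    filter_upwards [Ioi_mem_nhds hs] with x hx
    exact phi_of_pos hx

lemma mul_sub_le_sub_of_hasDerivAt {v g : ℝ → ℝ} {s t C : ℝ}
    (hv : ∀ x ∈ Icc s t, HasDerivAt v (g x) x) (hg : ∀ x ∈ Icc s t, C ≤ g x) :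
    ∀ x ∈ Icc s t, ∀ y ∈ Icc s t, x ≤ y → C * (y - x) ≤ v y - v x :=
  (convex_Icc s t).mul_sub_le_image_sub_of_le_deriv
    (fun x hx => (hv x hx).continuousAt.continuousWithinAt)
    (fun x hx => (hv x (interior_subset hx)).differentiableAt.differentiableWithinAt)
    (fun x hx => (hv x (interior_subset hx)).deriv ▸ hg x (interior_subset hx))

section Riccati

variable {q B s t : ℝ} {v g : ℝ → ℝ}

/- `φ_{2-q}(v) = |v|^{-q} v` has derivative `(1-q) |v|^{-q} v'`, which treats both signs of `v`
at once. -/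
lemma mul_sub_le_phi_sub_phi_of_le_deriv (hq : 1 ≤ q) (hst : s ≤ t)
    (hv : ∀ x ∈ Icc s t, HasDerivAt v (g x) x) (hne : ∀ x ∈ Icc s t, v x ≠ 0)
    (hg : ∀ x ∈ Icc s t, B * |v x| ^ q ≤ g x) :
    (q - 1) * B * (t - s) ≤ phi (2 - q) (v s) - phi (2 - q) (v t) := by
  have hderiv : ∀ x ∈ Icc s t, HasDerivAt (fun y => -phi (2 - q) (v y))
      ((q - 1) * (|v x| ^ (-q) * g x)) x := fun x hx =>
    ((hasDerivAt_phi (2 - q) (hne x hx)).comp x (hv x hx)).neg.congr_deriv (by ring_nf)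
  have hrate : ∀ x ∈ Icc s t, (q - 1) * B ≤ (q - 1) * (|v x| ^ (-q) * g x) := by
    intro x hx
    have hpos : 0 < |v x| := abs_pos.2 (hne x hx)
    calc (q - 1) * B = (q - 1) * (|v x| ^ (-q) * (B * |v x| ^ q)) := by
          rw [mul_left_comm _ B, ← Real.rpow_add hpos, neg_add_cancel, Real.rpow_zero, mul_one]
      _ ≤ (q - 1) * (|v x| ^ (-q) * g x) :=
          mul_le_mul_of_nonneg_left (mul_le_mul_of_nonneg_left (hg x hx) (by positivity))
            (by linarith)
  have hgrowth := mul_sub_le_sub_of_hasDerivAt hderiv hrate s ⟨le_rfl, hst⟩ t ⟨hst, le_rfl⟩ hst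
  linarith

lemma neg_lt_rpow_inv_of_le_deriv (hq : 1 < q) (hB : 0 < B) (hst : s < t)
    (hv : ∀ x ∈ Icc s t, HasDerivAt v (g x) x) (hneg : ∀ x ∈ Icc s t, v x < 0)
    (hg : ∀ x ∈ Icc s t, B * |v x| ^ q ≤ g x) :
    -v t < ((q - 1) * B * (t - s)) ^ (1 - q)⁻¹ := by
  have h := mul_sub_le_phi_sub_phi_of_le_deriv hq.le hst.le hv (fun x hx => (hneg x hx).ne) hg
  have hs := hneg s ⟨le_rfl, hst.le⟩
  have ht := hneg t ⟨hst.le, le_rfl⟩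
  rw [phi_of_neg hs, phi_of_neg ht, show 2 - q - 1 = 1 - q by ring] at h
  have hs' : 0 < (-v s) ^ (1 - q) := Real.rpow_pos_of_pos (neg_pos.2 hs) _
  have hE : 0 < (q - 1) * B * (t - s) := mul_pos (mul_pos (sub_pos.2 hq) hB) (sub_pos.2 hst)
  rw [Real.lt_rpow_inv_iff_of_neg (neg_pos.2 ht) hE (by linarith)]
  linarith

lemma lt_rpow_inv_of_le_deriv (hq : 1 < q) (hB : 0 < B) (hst : s < t)
    (hv : ∀ x ∈ Icc s t, HasDerivAt v (g x) x) (hpos : ∀ x ∈ Icc s t, 0 < v x)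
    (hg : ∀ x ∈ Icc s t, B * |v x| ^ q ≤ g x) :
    v s < ((q - 1) * B * (t - s)) ^ (1 - q)⁻¹ := by
  have h := mul_sub_le_phi_sub_phi_of_le_deriv hq.le hst.le hv (fun x hx => (hpos x hx).ne') hg
  have hs := hpos s ⟨le_rfl, hst.le⟩
  have ht := hpos t ⟨hst.le, le_rfl⟩
  rw [phi_of_pos hs, phi_of_pos ht, show 2 - q - 1 = 1 - q by ring] at h
  have ht' : 0 < v t ^ (1 - q) := Real.rpow_pos_of_pos ht _
  have hE : 0 < (q - 1) * B * (t - s) := mul_pos (mul_pos (sub_pos.2 hq) hB) (sub_pos.2 hst)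
  rw [Real.lt_rpow_inv_iff_of_neg hs hE (by linarith)]
  linarith

/- By comparison with `v' = B |v|^q`, `v` can be below `-R` only near the left end and above `R`
only near the right end, so the slope `v' ≥ A` cannot be large on the middle half. -/
theorem mul_le_of_riccati {A α L : ℝ} (hq : 1 < q) (hB : 0 < B) (hL : 0 < L)
    (hv : ∀ x ∈ Icc α (α + L), HasDerivAt v (g x) x)
    (hg : ∀ x ∈ Icc α (α + L), A + B * |v x| ^ q ≤ g x) :
    A * L ≤ 4 * ((q - 1) * B * (L / 4)) ^ (1 - q)⁻¹ := by
  set R := ((q - 1) * B * (L / 4)) ^ (1 - q)⁻¹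
  have hR : 0 < R := Real.rpow_pos_of_pos (by have := sub_pos.2 hq; positivity) _
  by_contra! hAL
  have hA : 0 < A := pos_of_mul_pos_left (by linarith) hL.le
  have hgq : ∀ x ∈ Icc α (α + L), B * |v x| ^ q ≤ g x := fun x hx => by
    linarith [hg x hx]
  have hslope := mul_sub_le_sub_of_hasDerivAt hv fun x hx => by
    linarith [hg x hx, mul_nonneg hB.le (Real.rpow_nonneg (abs_nonneg (v x)) q)]
  set t₁ := α + L / 4 with ht₁
  set t₂ := α + 3 * L / 4 with ht₂
  have hleft : -R ≤ v t₁ := by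
    by_contra! h
    have hneg : ∀ x ∈ Icc α t₁, v x < 0 := fun x hx => by
      have := hslope x (Icc_subset_Icc le_rfl (by linarith) hx) t₁ ⟨by linarith, by linarith⟩ hx.2
      nlinarith [hx.2]
    have := neg_lt_rpow_inv_of_le_deriv hq hB (by linarith : α < t₁)
      (fun x hx => hv x (Icc_subset_Icc le_rfl (by linarith) hx)) hneg
      (fun x hx => hgq x (Icc_subset_Icc le_rfl (by linarith) hx))
    rw [show t₁ - α = L / 4 by ring] at this
    linarith
  have hright : v t₂ ≤ R := by
    by_contra! h
    have hpos : ∀ x ∈ Icc t₂ (α + L), 0 < v x := fun x hx => by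
      have := hslope t₂ ⟨by linarith, by linarith⟩ x (Icc_subset_Icc (by linarith) le_rfl hx) hx.1
      nlinarith [hx.1]
    have := lt_rpow_inv_of_le_deriv hq hB (by linarith : t₂ < α + L)
      (fun x hx => hv x (Icc_subset_Icc (by linarith) le_rfl hx)) hpos
      (fun x hx => hgq x (Icc_subset_Icc (by linarith) le_rfl hx))
    rw [show α + L - t₂ = L / 4 by ring] at this
    linarith
  have hmid := hslope t₁ ⟨by linarith, by linarith⟩ t₂ ⟨by linarith, by linarith⟩ (by linarith)
  nlinarith

end Riccati

lemma riccati_abs_rpow_le {p ρ s : ℝ} (hp : 1 < p) (hρ₀ : 0 < ρ) (hρ₁ : ρ ≤ 1) (hs : s ≠ 0)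
    (w : ℝ) :
    (p - 1) * |ρ * phi p w / phi p s| ^ (p / (p - 1))
      ≤ ρ * phi p w * ((p - 1) * |s| ^ (p - 2) * w) / phi p s ^ 2 := by
  have hp₁ : p - 1 ≠ 0 := sub_ne_zero.2 hp.ne'
  have hs' : 0 < |s| := abs_pos.2 hs
  have hlhs : |ρ * phi p w / phi p s| ^ (p / (p - 1)) = ρ ^ (p / (p - 1)) * (|w| / |s|) ^ p := by
    rw [abs_div, abs_mul, abs_of_pos hρ₀, abs_phi hp.ne', abs_phi hp.ne', mul_div_assoc,
      ← Real.div_rpow (abs_nonneg w) hs'.le,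
      Real.mul_rpow hρ₀.le (by positivity), ← Real.rpow_mul (by positivity),
      mul_div_cancel₀ p hp₁]
  have hrhs : ρ * phi p w * ((p - 1) * |s| ^ (p - 2) * w) / phi p s ^ 2
      = (p - 1) * ρ * (|w| / |s|) ^ p := by
    have hsq : phi p s ^ 2 = |s| ^ (p - 2) * |s| ^ p := by
      rw [← sq_abs, abs_phi hp.ne', ← Real.rpow_natCast, ← Real.rpow_mul hs'.le,
        ← Real.rpow_add hs']
      ring_nf
    rw [hsq, Real.div_rpow (abs_nonneg w) hs'.le, ← phi_mul_self (by linarith) w]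
    field_simp [(Real.rpow_pos_of_pos hs' (p - 2)).ne']
  rw [hlhs, hrhs, mul_assoc]
  have hρq : ρ ^ (p / (p - 1)) ≤ ρ ^ (1 : ℝ) :=
    Real.rpow_le_rpow_of_exponent_ge hρ₀ hρ₁ ((one_le_div (by linarith)).2 (by linarith))
  rw [Real.rpow_one] at hρq
  gcongr

namespace SolEq

variable {p : ℝ} {N : ℕ} {F u u' : ℝ → ℝ}

lemma continuousOn (hsol : SolEq p N F u u') : ContinuousOn u (Icc 0 1) :=
  fun r hr => (hsol.1 r hr).continuousWithinAt

lemma hasDerivAt (hsol : SolEq p N F u u') {r : ℝ} (hr : r ∈ Ioo 0 1) :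
    HasDerivAt u (u' r) r :=
  (hsol.1 r (Ioo_subset_Icc_self hr)).hasDerivAt (Icc_mem_nhds hr.1 hr.2)

lemma hasDerivAt_flux (hsol : SolEq p N F u u') (hF : ContinuousOn F (Icc 0 1)) {r : ℝ}
    (hr : r ∈ Ioo 0 1) :
    HasDerivAt (fun ρ => ρ ^ (N - 1) * phi p (u' ρ)) (-F r) r := by
  have hnhds : Icc (0 : ℝ) 1 ∈ 𝓝 r := Icc_mem_nhds hr.1 hr.2
  have hint : IntervalIntegrable F volume 0 r :=
    (hF.mono (by rw [uIcc_of_le hr.1.le]; exact Icc_subset_Icc le_rfl hr.2.le)).intervalIntegrable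
  have hmeas : StronglyMeasurableAtFilter F (𝓝 r) :=
    ⟨Icc 0 1, hnhds, hF.aestronglyMeasurable measurableSet_Icc⟩
  refine ((intervalIntegral.integral_hasDerivAt_right hint hmeas
    ((hF.continuousWithinAt (Ioo_subset_Icc_self hr)).continuousAt hnhds)).const_sub
    ((0 : ℝ) ^ (N - 1) * phi p (u' 0))).congr_of_eventuallyEq ?_
  filter_upwards [hnhds] with x hx
  exact hsol.2.2 x hx

/- Where `u ≠ 0`, `v = -r^{N-1} φ_p(u') / φ_p(u)` satisfies the hypothesis of `mul_le_of_riccati`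
with `q = p / (p - 1)` and `B = p - 1`, for which its bound becomes `4 (L/4)^{1-p}`. -/
theorem exists_zero_of_le_div_phi (hp : 1 < p) (hsol : SolEq p N F u u')
    (hF : ContinuousOn F (Icc 0 1)) {α L A : ℝ} (hα : 0 < α) (hL : 0 < L) (hαL : α + L < 1)
    (hA : ∀ t ∈ Icc α (α + L), u t ≠ 0 → A ≤ F t / phi p (u t))
    (hAL : 4 * (L / 4) ^ (1 - p) < A * L) :
    ∃ z ∈ Icc α (α + L), u z = 0 := by
  by_contra! hne
  have hI : ∀ t ∈ Icc α (α + L), t ∈ Ioo 0 1 := fun t ht =>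
    ⟨hα.trans_le ht.1, ht.2.trans_lt hαL⟩
  have hp₁ : 0 < p - 1 := by linarith
  have hq : 1 < p / (p - 1) := (one_lt_div hp₁).2 (by linarith)
  have hv : ∀ t ∈ Icc α (α + L),
      HasDerivAt (fun ρ => -(ρ ^ (N - 1) * phi p (u' ρ)) / phi p (u ρ))
        (F t / phi p (u t)
          + t ^ (N - 1) * phi p (u' t) * ((p - 1) * |u t| ^ (p - 2) * u' t) / phi p (u t) ^ 2) t :=
    fun t ht => ((hsol.hasDerivAt_flux hF (hI t ht)).neg.div
      ((hasDerivAt_phi p (hne t ht)).comp t (hsol.hasDerivAt (hI t ht)))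
      (phi_ne_zero (hne t ht))).congr_deriv (by
        simp only [Function.comp_apply, Pi.neg_apply]
        field_simp [phi_ne_zero (hne t ht)]
        ring)
  have hg : ∀ t ∈ Icc α (α + L),
      A + (p - 1) * |-(t ^ (N - 1) * phi p (u' t)) / phi p (u t)| ^ (p / (p - 1))
        ≤ F t / phi p (u t)
          + t ^ (N - 1) * phi p (u' t) * ((p - 1) * |u t| ^ (p - 2) * u' t) / phi p (u t) ^ 2 := by
    intro t ht
    rw [neg_div, abs_neg]
    exact add_le_add (hA t ht (hne t ht)) (riccati_abs_rpow_le hp (pow_pos (hI t ht).1 _)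
      (pow_le_one₀ (hI t ht).1.le (hI t ht).2.le) (hne t ht) _)
  have hbound := mul_le_of_riccati hq hp₁ hL hv hg
  have hq₁ : (p / (p - 1) - 1) * (p - 1) = 1 := by field_simp; ring
  have hq₂ : (1 - p / (p - 1))⁻¹ = 1 - p := by field_simp; ring
  rw [hq₁, one_mul, hq₂] at hbound
  linarith

end SolEq

lemma exists_pos_of_volume_diff_lt_one {m : ℝ → ℝ}
    (h : (volume (Ioo (0:ℝ) 1 \ {r : ℝ | 0 < m r})).toReal < 1) :
    ∃ r ∈ Ioo (0:ℝ) 1, 0 < m r := by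
  by_contra! hle
  have hdiff : Ioo (0:ℝ) 1 \ {r : ℝ | 0 < m r} = Ioo 0 1 :=
    sdiff_eq_self_iff_disjoint.2 (disjoint_left.2 fun r hpos hr => (hle r hr).not_gt hpos)
  rw [hdiff, Real.volume_Ioo] at h
  norm_num at h

lemma exists_Icc_forall_le_of_pos {m : ℝ → ℝ} (hm : ContinuousOn m (Icc 0 1)) {r₀ : ℝ}
    (hr₀ : r₀ ∈ Ioo 0 1) (hpos : 0 < m r₀) :
    ∃ a b δ : ℝ, 0 < a ∧ a < b ∧ b < 1 ∧ 0 < δ ∧ ∀ t ∈ Icc a b, δ ≤ m t := by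
  have hnhds : {t | m r₀ / 2 < m t} ∩ Ioo 0 1 ∈ 𝓝 r₀ :=
    inter_mem ((hm.continuousAt (Icc_mem_nhds hr₀.1 hr₀.2)).eventually
      (lt_mem_nhds (half_lt_self hpos))) (Ioo_mem_nhds hr₀.1 hr₀.2)
  obtain ⟨ε, hε, hball⟩ := Metric.mem_nhds_iff.1 hnhds
  have hsub : Icc (r₀ - ε / 2) (r₀ + ε / 2) ⊆ {t | m r₀ / 2 < m t} ∩ Ioo 0 1 := by
    rw [← Real.closedBall_eq_Icc]
    exact (Metric.closedBall_subset_ball (half_lt_self hε)).trans hball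
  refine ⟨r₀ - ε / 2, r₀ + ε / 2, m r₀ / 2, (hsub ⟨le_rfl, by linarith⟩).2.1, by linarith,
    (hsub ⟨by linarith, le_rfl⟩).2.2, half_pos hpos, fun t ht => (hsub ht).1.le⟩

lemma mul_le_potential_div_phi {p c γ a δ t s : ℝ} {N : ℕ} {m f : ℝ → ℝ}
    (hc : 0 ≤ c) (hfc : ∀ s : ℝ, s ≠ 0 → c ≤ f s / phi p s) (hγ : 0 ≤ γ) (ha : 0 < a)
    (hat : a ≤ t) (hδ : 0 ≤ δ) (hδm : δ ≤ m t) (hs : s ≠ 0) :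
    γ * a ^ (N - 1) * δ * c ≤ γ * t ^ (N - 1) * m t * f s / phi p s := by
  have ht : 0 < t := ha.trans_le hat
  have hm : 0 ≤ m t := hδ.trans hδm
  have hcf := hfc s hs
  rw [mul_div_assoc]
  gcongr

lemma le_ncard_of_forall_exists_mem_Icc {S : Set ℝ} (hS : S.Finite) {a L : ℝ} (hL : 0 < L)
    {k : ℕ} (h : ∀ i : Fin k, ∃ z ∈ S, z ∈ Icc (a + 2 * i * L) (a + 2 * i * L + L)) :
    k ≤ S.ncard := by
  choose z hzS hz using h
  have hmono : StrictMono z := fun i j hij => by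
    have : (i : ℝ) + 1 ≤ j := by exact_mod_cast hij
    nlinarith [(hz i).2, (hz j).1]
  calc k = (range z).ncard := by rw [ncard_range_of_injective hmono.injective, Nat.card_fin]
    _ ≤ S.ncard := ncard_le_ncard (range_subset_iff.2 hzS) hS

theorem parameter_bounded_along_nodal_branch_general
    (p : ℝ) (hp : 1 < p) (N : ℕ)
    (m : ℝ → ℝ) (hm : ContinuousOn m (Icc (0:ℝ) 1))
    (hmeas₂ : (volume (Ioo (0:ℝ) 1 \ {r : ℝ | 0 < m r})).toReal < 1)
    (f : ℝ → ℝ) (hf : Continuous f)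
    (c : ℝ) (hc : 0 < c) (hfc : ∀ s : ℝ, s ≠ 0 → c ≤ f s / phi p s)
    (γ : ℝ) (hγ : 0 < γ) (k : ℕ) (hk : 1 ≤ k)
    (η : ℕ → ℝ) (hη : Tendsto η atTop atTop)
    (y y' : ℕ → ℝ → ℝ)
    (hsol : ∀ n, SolEq p N (fun t => γ * η n * t ^ (N - 1) * m t * f (y n t))
      (y n) (y' n))
    (hzeros : ∀ n, {r ∈ Ioo (0:ℝ) 1 | y n r = 0}.Finite ∧
      {r ∈ Ioo (0:ℝ) 1 | y n r = 0}.ncard = k - 1 ∧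
      ∀ r ∈ Ioo (0:ℝ) 1, y n r = 0 → y' n r ≠ 0) :
    False := by
  obtain ⟨r₀, hr₀, hm₀⟩ := exists_pos_of_volume_diff_lt_one hmeas₂
  obtain ⟨a, b, δ, ha, hab, hb, hδ, hmδ⟩ := exists_Icc_forall_le_of_pos hm hr₀ hm₀
  set L := (b - a) / (2 * k) with hLdef
  have hL : 0 < L := div_pos (by linarith) (by positivity)
  have hD : 0 < γ * a ^ (N - 1) * δ * c * L := by positivity
  obtain ⟨n, hn⟩ :=
    (hη.eventually_gt_atTop (4 * (L / 4) ^ (1 - p) / (γ * a ^ (N - 1) * δ * c * L))).exists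
  have hη₀ : 0 < η n := lt_trans (by positivity) hn
  have hF : ContinuousOn (fun t => γ * η n * t ^ (N - 1) * m t * f (y n t)) (Icc 0 1) :=
    ((continuousOn_const.mul (continuousOn_pow _)).mul hm).mul
      (hf.comp_continuousOn (hsol n).continuousOn)
  have hzero : ∀ i : Fin k, ∃ z ∈ {r ∈ Ioo (0:ℝ) 1 | y n r = 0},
      z ∈ Icc (a + 2 * i * L) (a + 2 * i * L + L) := by
    intro i
    have hi : (i : ℝ) + 1 ≤ k := by exact_mod_cast i.isLt
    have hkL : 2 * k * L = b - a := by rw [hLdef]; field_simp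
    have hsub : Icc (a + 2 * i * L) (a + 2 * i * L + L) ⊆ Icc a b :=
      Icc_subset_Icc (by nlinarith) (by nlinarith)
    obtain ⟨z, hz, hz₀⟩ := (hsol n).exists_zero_of_le_div_phi hp hF (α := a + 2 * i * L)
      (by positivity) hL (by nlinarith)
      (fun t ht hy => mul_le_potential_div_phi hc.le hfc (by positivity) ha (hsub ht).1 hδ.le
        (hmδ t (hsub ht)) hy)
      (by rw [div_lt_iff₀ hD] at hn; linarith)
    exact ⟨z, ⟨⟨ha.trans_le (hsub hz).1, (hsub hz).2.trans_lt hb⟩, hz₀⟩, hz⟩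
  have hcard := le_ncard_of_forall_exists_mem_Icc (hzeros n).1 hL hzero
  rw [(hzeros n).2.1] at hcard
  omega

/-- A priori bound on the bifurcation parameter along nodal branches (Step 2 in the
proof of Theorem 4.1): there is no sequence `η_n → +∞` of parameters carrying nontrivial
solutions with exactly `k-1` simple zeros, given `0 < meas((0,1) \ I⁺) < 1`. -/
theorem parameter_bounded_along_nodal_branch
    (p : ℝ) (hp : 1 < p) (N : ℕ) (hN : 1 ≤ N)
    (m : ℝ → ℝ) (hm : ContinuousOn m (Icc (0:ℝ) 1))
    (hmeas₁ : 0 < (volume (Ioo (0:ℝ) 1 \ {r : ℝ | 0 < m r})).toReal)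
    (hmeas₂ : (volume (Ioo (0:ℝ) 1 \ {r : ℝ | 0 < m r})).toReal < 1)
    (f : ℝ → ℝ) (hf : Continuous f) (hsign : ∀ s : ℝ, s ≠ 0 → 0 < f s * s)
    (c : ℝ) (hc : 0 < c) (hfc : ∀ s : ℝ, s ≠ 0 → c ≤ f s / phi p s)
    (γ : ℝ) (hγ : 0 < γ) (k : ℕ) (hk : 1 ≤ k)
    (η : ℕ → ℝ) (hη : Tendsto η atTop atTop)
    (y y' : ℕ → ℝ → ℝ)
    (hsol : ∀ n, SolEq p N (fun t => γ * η n * t ^ (N - 1) * m t * f (y n t))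
      (y n) (y' n))
    (hbc : ∀ n, (y' n) 0 = 0 ∧ (y n) 1 = 0)
    (hnt : ∀ n, ∃ r ∈ Icc (0:ℝ) 1, y n r ≠ 0)
    (hzeros : ∀ n, {r ∈ Ioo (0:ℝ) 1 | y n r = 0}.Finite ∧
      {r ∈ Ioo (0:ℝ) 1 | y n r = 0}.ncard = k - 1 ∧
      ∀ r ∈ Ioo (0:ℝ) 1, y n r = 0 → y' n r ≠ 0) :
    False :=
  parameter_bounded_along_nodal_branch_general p hp N m hm hmeas₂ f hf c hc hfc γ hγ k hk η hη y y'
    hsol hzeros
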